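/- arXiv:1506.00740 — 11 statements merged into one kernel-verified Lean document; each statement's English description precedes it below -/
import Mathlib

section
/- The asymmetric Lee distance d_λ on pairs of binary sequences, defined for (a;b),(c;d) ∈ F_2^n × F_2^n by d_λ((a;b),(c;d)) = Σ_{i=1}^n [ (1+λ)(𝟙(a_i=b_i) + 𝟙(c_i=d_i)) + λ·𝟙(a_i=b̄_i=c̄_i=d_i) − 2(1+λ)·𝟙(a_i=b_i=c_i=d_i) ], is a metric on F_2^n × F_2^n for every positive integer λ: it is nonnegative, zero iff the arguments are equal, symmetric, and satisfies the triangle inequality. -/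
open Finset

def ind (p : Prop) [Decidable p] : ℤ := if p then 1 else 0

def aldSym (lam : ℕ) (a b c d : Bool) : ℤ :=
  (1 + lam) * (ind (a = b) + ind (c = d))
    + lam * ind (a = !b ∧ !b = !c ∧ !c = d)
    - 2 * (1 + lam) * ind (a = b ∧ b = c ∧ c = d)

def ALD (lam n : ℕ) (x y : (Fin n → Bool) × (Fin n → Bool)) : ℤ :=
  ∑ i, aldSym lam (x.1 i) (x.2 i) (y.1 i) (y.2 i)

def wt {n : ℕ} (a b : Fin n → Bool) : ℕ :=
  (Finset.univ.filter fun i => a i ≠ b i).card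

lemma aldSym_nonneg (lam : ℕ) (hlam : 0 < lam) (a b c d : Bool) :
    0 ≤ aldSym lam a b c d := by
  cases a <;> cases b <;> cases c <;> cases d <;> simp [aldSym, ind] <;> omega

lemma aldSym_eq_zero (lam : ℕ) (hlam : 0 < lam) (a b c d : Bool) :
    aldSym lam a b c d = 0 ↔ a = c ∧ b = d := by
  cases a <;> cases b <;> cases c <;> cases d <;> simp [aldSym, ind] <;> omega

lemma aldSym_symm (lam : ℕ) (a b c d : Bool) :
    aldSym lam a b c d = aldSym lam c d a b := by
  cases a <;> cases b <;> cases c <;> cases d <;> simp [aldSym, ind] <;> ring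

lemma aldSym_tri (lam : ℕ) (hlam : 0 < lam) (a b c d e f : Bool) :
    aldSym lam a b e f ≤ aldSym lam a b c d + aldSym lam c d e f := by
  cases a <;> cases b <;> cases c <;> cases d <;> cases e <;> cases f <;>
    simp [aldSym, ind] <;> omega

theorem ald_is_metric (lam n : ℕ) (hlam : 0 < lam) :
    (∀ x y : (Fin n → Bool) × (Fin n → Bool), 0 ≤ ALD lam n x y) ∧
    (∀ x y : (Fin n → Bool) × (Fin n → Bool), ALD lam n x y = 0 ↔ x = y) ∧
    (∀ x y : (Fin n → Bool) × (Fin n → Bool), ALD lam n x y = ALD lam n y x) ∧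
    (∀ x y z : (Fin n → Bool) × (Fin n → Bool),
      ALD lam n x z ≤ ALD lam n x y + ALD lam n y z) := by
  refine ⟨fun x y => ?_, fun x y => ?_, fun x y => ?_, fun x y z => ?_⟩
  · exact Finset.sum_nonneg fun i _ => aldSym_nonneg lam hlam _ _ _ _
  · constructor
    · intro h
      have h0 := (Finset.sum_eq_zero_iff_of_nonneg
        (fun i _ => aldSym_nonneg lam hlam (x.1 i) (x.2 i) (y.1 i) (y.2 i))).mp h
      have : ∀ i, x.1 i = y.1 i ∧ x.2 i = y.2 i := fun i =>
        (aldSym_eq_zero lam hlam _ _ _ _).mp (h0 i (Finset.mem_univ i))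
      exact Prod.ext (funext fun i => (this i).1) (funext fun i => (this i).2)
    · rintro rfl
      exact Finset.sum_eq_zero fun i _ =>
        (aldSym_eq_zero lam hlam _ _ _ _).mpr ⟨rfl, rfl⟩
  · exact Finset.sum_congr rfl fun i _ => aldSym_symm lam _ _ _ _
  · unfold ALD; rw [← Finset.sum_add_distrib]
    exact Finset.sum_le_sum fun i _ => aldSym_tri lam hlam _ _ _ _ _ _
end

section
/- Under the Gray map Z: F_2^2 → Z_4 given by (0;0)↦1, (1;0)↦0, (0;1)↦2, (1;1)↦3 (extended coordinatewise to length-n sequences), for all pairs z_1, z_2 the asymmetric Lee distance satisfies d_λ(z_1, z_2) ≤ (1+λ)·d_L(z_1, z_2), where d_L is the Lee distance on Z_4^n; moreover d_λ(z_1,z_2) = (1+λ)d_L(z_1,z_2) − (2+λ)·|{i : {z_{1,i}, z_{2,i}} = {0,2}}|. -/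
open Finset

def gray (a b : Bool) : ZMod 4 :=
  match a, b with
  | false, false => 1
  | true,  false => 0
  | false, true  => 2
  | true,  true  => 3

def leeSym (a b : ZMod 4) : ℕ := min ((a - b).val) ((b - a).val)

def leeDist {n : ℕ} (x y : (Fin n → Bool) × (Fin n → Bool)) : ℕ :=
  ∑ i, leeSym (gray (x.1 i) (x.2 i)) (gray (y.1 i) (y.2 i))

lemma key (lam : ℕ) (a b c d : Bool) :
    aldSym lam a b c d =
      (1 + lam) * (leeSym (gray a b) (gray c d) : ℤ)
        - (2 + lam) * (if ({gray a b, gray c d} : Finset (ZMod 4)) = ({0,2} : Finset (ZMod 4)) then (1:ℤ) else 0) := by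
  cases a <;> cases b <;> cases c <;> cases d <;>
    simp (config := { decide := true }) only [gray, aldSym, ind,
      show leeSym 0 0 = 0 from by decide,
      show leeSym 0 1 = 1 from by decide,
      show leeSym 0 2 = 2 from by decide,
      show leeSym 0 3 = 1 from by decide,
      show leeSym 1 0 = 1 from by decide,
      show leeSym 1 1 = 0 from by decide,
      show leeSym 1 2 = 1 from by decide,
      show leeSym 1 3 = 2 from by decide,
      show leeSym 2 0 = 2 from by decide,
      show leeSym 2 1 = 1 from by decide,
      show leeSym 2 2 = 0 from by decide,
      show leeSym 2 3 = 1 from by decide,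
      show leeSym 3 0 = 1 from by decide,
      show leeSym 3 1 = 2 from by decide,
      show leeSym 3 2 = 1 from by decide,
      show leeSym 3 3 = 0 from by decide] <;>
    norm_num <;> ring

theorem ald_eq_scaled_lee (lam n : ℕ) (hlam : 0 < lam)
    (x y : (Fin n → Bool) × (Fin n → Bool)) :
    ALD lam n x y =
      (1 + lam) * (leeDist x y : ℤ) -
        (2 + lam) * ((Finset.univ.filter fun i : Fin n =>
          ({gray (x.1 i) (x.2 i), gray (y.1 i) (y.2 i)} : Finset (ZMod 4)) =
            ({0, 2} : Finset (ZMod 4))).card : ℤ) ∧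
    ALD lam n x y ≤ (1 + lam) * (leeDist x y : ℤ) := by
  have hmain : ALD lam n x y =
      (1 + lam) * (leeDist x y : ℤ) -
        (2 + lam) * ((Finset.univ.filter fun i : Fin n =>
          ({gray (x.1 i) (x.2 i), gray (y.1 i) (y.2 i)} : Finset (ZMod 4)) =
            ({0, 2} : Finset (ZMod 4))).card : ℤ) := by
    unfold ALD leeDist
    rw [Finset.sum_congr rfl fun i _ => key lam (x.1 i) (x.2 i) (y.1 i) (y.2 i),
      Finset.sum_sub_distrib, ← Finset.mul_sum, ← Finset.mul_sum, Finset.sum_boole,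
      Nat.cast_sum]
  refine ⟨hmain, ?_⟩
  rw [hmain]
  have : (0:ℤ) ≤ (2 + lam) * ((Finset.univ.filter fun i : Fin n =>
          ({gray (x.1 i) (x.2 i), gray (y.1 i) (y.2 i)} : Finset (ZMod 4)) =
            ({0, 2} : Finset (ZMod 4))).card : ℤ) := by positivity
  linarith
end

section
/- Let (a;b) ∈ F_2^n × F_2^n and let w(a;b) denote the Hamming distance between a and b. Then the cardinality of the ball B_{(r,λ)}(a;b) = {(c;d) : d_λ((a;b),(c;d)) ≤ r} depends on (a;b) only through w(a;b); i.e., if w(a;b) = w(a';b') then |B_{(r,λ)}(a;b)| = |B_{(r,λ)}(a';b')|. -/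
open Finset

/-
Two kinds of maps are isometries of `d_λ`, because each summand `aldSym` is invariant under them:
XOR-ing all four bits of a coordinate with the same bit, and permuting coordinates simultaneously
in both halves. XOR-ing `(a;b)` with `a` gives `(0; a ⊕ b)`, where `a ⊕ b` has exactly `w(a;b)`
ones, and two vectors with the same number of ones differ by a coordinate permutation. So any two
centres of equal weight are related by an isometry, which maps one ball bijectively onto the other.
-/

lemma card_filter_le_apply_eq_of_isometry {α β : Type*} [Fintype α] [LE β] [DecidableLE β]
    (d : α → α → β) (e : α ≃ α) (he : ∀ x y, d (e x) (e y) = d x y) (x : α) (r : β) :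
    #{y | d (e x) y ≤ r} = #{y | d x y ≤ r} :=
  (card_equiv e fun y => by simp [he]).symm

lemma aldSym_xor (lam : ℕ) (s a b c d : Bool) :
    aldSym lam (xor a s) (xor b s) (xor c s) (xor d s) = aldSym lam a b c d := by
  cases s <;> cases a <;> cases b <;> cases c <;> cases d <;> simp [aldSym, ind]

lemma exists_perm_comp_eq_of_card_eq {ι : Type*} [Fintype ι] (u u' : ι → Bool)
    (h : #{i | u i} = #{i | u' i}) : ∃ σ : Equiv.Perm ι, u ∘ σ = u' := by
  obtain ⟨σ, hσ⟩ := Equiv.Perm.exists_map_finset_eq {i | u' i} {i | u i} h.symm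
  refine ⟨σ, funext fun i => ?_⟩
  simpa using (Finset.ext_iff.mp hσ (σ i)).symm

section

variable {n : ℕ}

def xorPair (s : Fin n → Bool) : Equiv.Perm ((Fin n → Bool) × (Fin n → Bool)) :=
  Function.Involutive.toPerm (fun y => (fun i => xor (y.1 i) (s i), fun i => xor (y.2 i) (s i)))
    fun y => by ext i <;> simp

def permPair (σ : Equiv.Perm (Fin n)) : Equiv.Perm ((Fin n → Bool) × (Fin n → Bool)) :=
  (σ.symm.arrowCongr (Equiv.refl Bool)).prodCongr (σ.symm.arrowCongr (Equiv.refl Bool))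

@[simp]
lemma xorPair_apply (s : Fin n → Bool) (y : (Fin n → Bool) × (Fin n → Bool)) :
    xorPair s y = (fun i => xor (y.1 i) (s i), fun i => xor (y.2 i) (s i)) :=
  rfl

@[simp]
lemma permPair_apply (σ : Equiv.Perm (Fin n)) (y : (Fin n → Bool) × (Fin n → Bool)) :
    permPair σ y = (y.1 ∘ σ, y.2 ∘ σ) :=
  rfl

lemma ALD_xorPair (lam : ℕ) (s : Fin n → Bool) (x y : (Fin n → Bool) × (Fin n → Bool)) :
    ALD lam n (xorPair s x) (xorPair s y) = ALD lam n x y := by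
  simp only [ALD, xorPair_apply, aldSym_xor]

lemma ALD_permPair (lam : ℕ) (σ : Equiv.Perm (Fin n)) (x y : (Fin n → Bool) × (Fin n → Bool)) :
    ALD lam n (permPair σ x) (permPair σ y) = ALD lam n x y :=
  Equiv.sum_comp σ fun i => aldSym lam (x.1 i) (x.2 i) (y.1 i) (y.2 i)

lemma xorPair_fst_self (x : (Fin n → Bool) × (Fin n → Bool)) :
    xorPair x.1 x = (fun _ => false, fun i => xor (x.2 i) (x.1 i)) := by
  ext i <;> simp

lemma wt_eq_card_xor (a b : Fin n → Bool) : wt a b = #{i | xor (b i) (a i)} := by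
  simp only [wt, Bool.xor_comm (b _), Bool.xor_iff_ne]

end

theorem ald_ball_card_depends_only_on_weight_general (lam n : ℕ) (r : ℤ)
    (x x' : (Fin n → Bool) × (Fin n → Bool))
    (hw : wt x.1 x.2 = wt x'.1 x'.2) :
    ((Finset.univ.filter fun y : (Fin n → Bool) × (Fin n → Bool) =>
        ALD lam n x y ≤ r)).card =
    ((Finset.univ.filter fun y : (Fin n → Bool) × (Fin n → Bool) =>
        ALD lam n x' y ≤ r)).card := by
  rw [wt_eq_card_xor, wt_eq_card_xor] at hw
  obtain ⟨σ, hσ⟩ := exists_perm_comp_eq_of_card_eq _ _ hw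
  have hx : permPair σ (xorPair x.1 x) = xorPair x'.1 x' := by
    simp only [xorPair_fst_self, permPair_apply, ← hσ]
    rfl
  rw [← card_filter_le_apply_eq_of_isometry _ _ (ALD_xorPair lam x.1) x r,
    ← card_filter_le_apply_eq_of_isometry _ _ (ALD_xorPair lam x'.1) x' r, ← hx,
    card_filter_le_apply_eq_of_isometry _ _ (ALD_permPair lam σ)]

theorem ald_ball_card_depends_only_on_weight (lam n : ℕ) (hlam : 0 < lam) (r : ℤ)
    (x x' : (Fin n → Bool) × (Fin n → Bool))
    (hw : wt x.1 x.2 = wt x'.1 x'.2) :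
    ((Finset.univ.filter fun y : (Fin n → Bool) × (Fin n → Bool) =>
        ALD lam n x y ≤ r)).card =
    ((Finset.univ.filter fun y : (Fin n → Bool) × (Fin n → Bool) =>
        ALD lam n x' y ≤ r)).card :=
  ald_ball_card_depends_only_on_weight_general lam n r x x' hw
end

section
/- For positive integers n, w, r with w ≤ n and (a;b) ∈ F_2^n × F_2^n with w(a;b) = w, the number S_λ(n,w,r) of pairs (c;d) at asymmetric Lee distance exactly r from (a;b) equals Σ_{k,ℓ,m : (2k+ℓ)(1+λ)+λm = r} C(w,m)·C(n−w,k)·C(n−k−m,ℓ)·2^ℓ. -/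
open Finset

open Polynomial

/-!
Summing over coordinates, `#{y | d_λ(x, y) = r}` is the coefficient of `X ^ r` in the product of the
per-coordinate enumerators `∑_{(c, d)} X ^ d_λ((a_i, b_i), (c, d))`. A coordinate with `a_i = b_i`
contributes `X ^ (2(1+λ)) + (2 X ^ (1+λ) + 1)` and one with `a_i ≠ b_i` contributes
`X ^ λ + (2 X ^ (1+λ) + 1)`; expanding both binomial powers, and then the common power of
`2 X ^ (1+λ) + 1`, reads off the coefficient: `k` Class 3 moves among the `n - w` equal coordinates,
`m` Class 1 moves among the `w` unequal ones, and `ℓ` Class 2 moves among the remaining `n - k - m`.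
-/

-- `aldSym` as a natural number: `0`, `λ` (Class 1), `1 + λ` (Class 2) or `2(1 + λ)` (Class 3).
def aldCost (lam : ℕ) (a b c d : Bool) : ℕ :=
  if a = b then (if c = d then (if a = c then 0 else 2 * (1 + lam)) else 1 + lam)
  else (if c = d then 1 + lam else (if a = c then 0 else lam))

lemma aldSym_eq_aldCost (lam : ℕ) (a b c d : Bool) :
    aldSym lam a b c d = aldCost lam a b c d := by
  cases a <;> cases b <;> cases c <;> cases d <;> simp [aldSym, aldCost, ind] <;> ring

lemma card_filter_ALD_eq (lam n r : ℕ) (x : (Fin n → Bool) × (Fin n → Bool)) :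
    #{y | ALD lam n x y = r} =
      #{z : Fin n → Bool × Bool | ∑ i, aldCost lam (x.1 i) (x.2 i) (z i).1 (z i).2 = r} := by
  refine card_equiv (Equiv.arrowProdEquivProdArrow _ _ _).symm fun y => ?_
  simp [ALD, aldSym_eq_aldCost, Equiv.arrowProdEquivProdArrow, ← Nat.cast_sum]

theorem card_filter_sum_eq_coeff_prod {ι α : Type*} [Fintype ι] [DecidableEq ι] [Fintype α]
    (g : ι → α → ℕ) (r : ℕ) :
    #{z : ι → α | ∑ i, g i (z i) = r} = (∏ i, ∑ a, (X : ℕ[X]) ^ g i a).coeff r := by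
  rw [prod_univ_sum, Fintype.piFinset_univ, finsetSum_coeff, card_filter]
  refine sum_congr rfl fun z _ => ?_
  rw [prod_pow_eq_pow_sum, coeff_X_pow]
  exact if_congr eq_comm rfl rfl

theorem add_pow_of_le {R : Type*} [CommSemiring R] (x y : R) {n N : ℕ} (h : n ≤ N) :
    (x + y) ^ n = ∑ k ∈ range (N + 1), x ^ k * y ^ (n - k) * n.choose k := by
  rw [add_pow]
  refine sum_subset (range_subset_range.2 (by omega)) fun k _ hk => ?_
  rw [Nat.choose_eq_zero_of_lt (by simpa using hk), Nat.cast_zero, mul_zero]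

theorem add_pow_mul_add_pow {R : Type*} [CommSemiring R] (x y z : R) (n w : ℕ) :
    (x + z) ^ n * (y + z) ^ w = ∑ k ∈ range (n + w + 1), ∑ m ∈ range (n + w + 1),
      x ^ k * y ^ m * z ^ (n + w - k - m) * n.choose k * w.choose m := by
  rw [add_pow_of_le x z (Nat.le_add_right n w), add_pow_of_le y z (Nat.le_add_left w n),
    sum_mul_sum]
  refine sum_congr rfl fun k _ => sum_congr rfl fun m _ => ?_
  by_cases hk : k ≤ n
  · by_cases hm : m ≤ w
    · rw [show n + w - k - m = (n - k) + (w - m) by omega, pow_add]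
      ring
    · rw [Nat.choose_eq_zero_of_lt (not_le.1 hm)]
      simp
  · rw [Nat.choose_eq_zero_of_lt (not_le.1 hk)]
    simp

lemma sum_X_pow_aldCost (lam : ℕ) (a b : Bool) :
    ∑ v : Bool × Bool, (X : ℕ[X]) ^ aldCost lam a b v.1 v.2 =
      if a = b then X ^ (2 * (1 + lam)) + (2 * X ^ (1 + lam) + 1)
      else X ^ lam + (2 * X ^ (1 + lam) + 1) := by
  cases a <;> cases b <;> simp [Fintype.sum_prod_type, aldCost] <;> ring

lemma prod_ite_eq_pow_mul_pow_wt {M : Type*} [CommMonoid M] {n : ℕ} (a b : Fin n → Bool)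
    (p q : M) : ∏ i, (if a i = b i then p else q) = p ^ (n - wt a b) * q ^ wt a b := by
  rw [prod_ite, prod_const, prod_const, wt]
  simp_rw [ne_eq]
  congr 2
  have := card_filter_add_card_filter_not (s := (univ : Finset (Fin n))) (fun i => a i = b i)
  simp only [card_univ, Fintype.card_fin] at this
  omega

noncomputable def aldSpherePoly (lam n w : ℕ) : ℕ[X] :=
  (X ^ (2 * (1 + lam)) + (2 * X ^ (1 + lam) + 1)) ^ (n - w) *
    (X ^ lam + (2 * X ^ (1 + lam) + 1)) ^ w

lemma aldSpherePoly_eq_sum_monomial (lam : ℕ) {n w : ℕ} (hwn : w ≤ n) :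
    aldSpherePoly lam n w = ∑ k ∈ range (n + 1), ∑ l ∈ range (n + 1), ∑ m ∈ range (n + 1),
      monomial ((2 * k + l) * (1 + lam) + lam * m)
        (w.choose m * (n - w).choose k * (n - k - m).choose l * 2 ^ l) := by
  rw [aldSpherePoly, add_pow_mul_add_pow, Nat.sub_add_cancel hwn]
  refine sum_congr rfl fun k _ => ?_
  rw [sum_comm]
  refine sum_congr rfl fun m _ => ?_
  rw [add_pow_of_le _ _ (show n - k - m ≤ n by omega), mul_sum, sum_mul, sum_mul]
  refine sum_congr rfl fun l _ => ?_
  rw [← C_mul_X_pow_eq_monomial]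
  simp only [map_mul, map_pow, map_ofNat, eq_natCast]
  ring

theorem ald_sphere_size_general (lam n w r : ℕ) (hwn : w ≤ n)
    (x : (Fin n → Bool) × (Fin n → Bool)) (hx : wt x.1 x.2 = w) :
    ((Finset.univ.filter fun y : (Fin n → Bool) × (Fin n → Bool) =>
        ALD lam n x y = (r : ℤ))).card =
      ∑ k ∈ Finset.range (n + 1), ∑ l ∈ Finset.range (n + 1),
        ∑ m ∈ Finset.range (n + 1),
          if (2 * k + l) * (1 + lam) + lam * m = r then
            w.choose m * (n - w).choose k * (n - k - m).choose l * 2 ^ l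
          else 0 := by
  rw [card_filter_ALD_eq]
  refine (card_filter_sum_eq_coeff_prod
    (fun i (v : Bool × Bool) => aldCost lam (x.1 i) (x.2 i) v.1 v.2) r).trans ?_
  simp only [sum_X_pow_aldCost]
  rw [prod_ite_eq_pow_mul_pow_wt, hx, ← aldSpherePoly, aldSpherePoly_eq_sum_monomial lam hwn]
  simp only [finsetSum_coeff, coeff_monomial]

theorem ald_sphere_size (lam n w r : ℕ) (hlam : 0 < lam) (hn : 0 < n) (hw : 0 < w)
    (hr : 0 < r) (hwn : w ≤ n)
    (x : (Fin n → Bool) × (Fin n → Bool)) (hx : wt x.1 x.2 = w) :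
    ((Finset.univ.filter fun y : (Fin n → Bool) × (Fin n → Bool) =>
        ALD lam n x y = (r : ℤ))).card =
      ∑ k ∈ Finset.range (n + 1), ∑ l ∈ Finset.range (n + 1),
        ∑ m ∈ Finset.range (n + 1),
          if (2 * k + l) * (1 + lam) + lam * m = r then
            w.choose m * (n - w).choose k * (n - k - m).choose l * 2 ^ l
          else 0 :=
  ald_sphere_size_general lam n w r hwn x hx
end

section
/- For positive integers n, w, r with 1 ≤ w ≤ n, the ball volume V_λ(n,w,r) = Σ_{k,ℓ,m : (2k+ℓ)(1+λ)+λm ≤ r} C(w,m)·C(n−w,k)·C(n−k−m,ℓ)·2^ℓ is nondecreasing in w; that is, V_λ(n,w,r) ≥ V_λ(n,w−1,r). -/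
open Finset

def V (lam n w r : ℕ) : ℕ :=
  ∑ k ∈ Finset.range (n + 1), ∑ l ∈ Finset.range (n + 1),
    ∑ m ∈ Finset.range (n + 1),
      if (2 * k + l) * (1 + lam) + lam * m ≤ r then
        w.choose m * (n - w).choose k * (n - k - m).choose l * 2 ^ l
      else 0

lemma mul_ite_zero' (p : Prop) [Decidable p] (a b : ℕ) :
    (if p then a * b else 0) = a * (if p then b else 0) := by
  split <;> simp

lemma pascal_raw (x n : ℕ) (g : ℕ → ℕ) :
    ∑ k ∈ Finset.range (n+1), (x+1).choose k * g k
      = ∑ k ∈ Finset.range (n+1), x.choose k * g k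
        + ∑ k ∈ Finset.range n, x.choose k * g (k+1) := by
  rw [Finset.sum_range_succ' (fun k => (x+1).choose k * g k),
      Finset.sum_range_succ' (fun k => x.choose k * g k)]
  simp only [Nat.choose_succ_succ', add_mul, Finset.sum_add_distrib, Nat.choose_zero_right]
  omega

theorem ald_ball_volume_monotone (lam n w r : ℕ) (hlam : 0 < lam) (hn : 0 < n)
    (hw : 1 ≤ w) (hr : 0 < r) (hwn : w ≤ n) :
    V lam n (w - 1) r ≤ V lam n w r := by
  obtain ⟨W, rfl⟩ : ∃ W, w = W + 1 := ⟨w - 1, (Nat.succ_pred_eq_of_pos hw).symm⟩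
  simp only [Nat.add_sub_cancel]
  set u := n - (W + 1) with hudef
  have hu : n - W = u + 1 := by omega
  set T1 : ℕ := ∑ k ∈ range (n+1), ∑ l ∈ range (n+1), ∑ m ∈ range (n+1),
      if (2*k+l)*(1+lam)+lam*m ≤ r then W.choose m * u.choose k * (n-k-m).choose l * 2^l else 0
    with hT1
  have hR : V lam n (W+1) r
      = T1
        + ∑ k ∈ range (n+1), ∑ l ∈ range (n+1), ∑ m ∈ range n,
          (if (2*k+l)*(1+lam)+lam*(m+1) ≤ r then
            W.choose m * u.choose k * (n-k-(m+1)).choose l * 2^l else 0) := by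
    unfold V
    rw [hT1, ← Finset.sum_add_distrib]
    refine Finset.sum_congr rfl fun k _ => ?_
    rw [← Finset.sum_add_distrib]
    refine Finset.sum_congr rfl fun l _ => ?_
    have h := pascal_raw W n (fun m =>
      if (2*k+l)*(1+lam)+lam*m ≤ r then u.choose k * (n-k-m).choose l * 2^l else 0)
    simp only [← mul_ite_zero', ← mul_assoc] at h
    exact h
  have hL : V lam n W r
      = T1
        + ∑ k ∈ range n, ∑ l ∈ range (n+1), ∑ m ∈ range (n+1),
          (if (2*(k+1)+l)*(1+lam)+lam*m ≤ r then
            W.choose m * u.choose k * (n-(k+1)-m).choose l * 2^l else 0) := by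
    unfold V
    rw [hu]
    have key : ∀ v j k : ℕ, (∑ l ∈ range (n+1), ∑ m ∈ range (n+1),
          if (2*j+l)*(1+lam)+lam*m ≤ r then W.choose m * v.choose k * (n-j-m).choose l * 2^l else 0)
        = v.choose k * ∑ l ∈ range (n+1), ∑ m ∈ range (n+1),
          (if (2*j+l)*(1+lam)+lam*m ≤ r then W.choose m * (n-j-m).choose l * 2^l else 0) := by
      intro v j k
      rw [Finset.mul_sum]
      refine Finset.sum_congr rfl fun l _ => ?_
      rw [Finset.mul_sum]
      refine Finset.sum_congr rfl fun m _ => ?_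
      split <;> ring
    simp only [key]
    rw [pascal_raw u n (fun k => ∑ l ∈ range (n+1), ∑ m ∈ range (n+1),
      (if (2*k+l)*(1+lam)+lam*m ≤ r then W.choose m * (n-k-m).choose l * 2^l else 0))]
    congr 1
    exact Finset.sum_congr rfl fun k _ => (key u k k).symm
  rw [hL, hR]
  refine Nat.add_le_add_left ?_ T1
  calc (∑ k ∈ range n, ∑ l ∈ range (n+1), ∑ m ∈ range (n+1),
          (if (2*(k+1)+l)*(1+lam)+lam*m ≤ r then
            W.choose m * u.choose k * (n-(k+1)-m).choose l * 2^l else 0))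
      = ∑ k ∈ range n, ∑ l ∈ range (n+1), ∑ m ∈ range n,
          (if (2*(k+1)+l)*(1+lam)+lam*m ≤ r then
            W.choose m * u.choose k * (n-(k+1)-m).choose l * 2^l else 0) := by
        refine Finset.sum_congr rfl fun k _ => Finset.sum_congr rfl fun l _ => ?_
        rw [Finset.sum_range_succ]
        have hW0 : W.choose n = 0 := Nat.choose_eq_zero_of_lt (by omega)
        simp [hW0]
    _ ≤ ∑ k ∈ range n, ∑ l ∈ range (n+1), ∑ m ∈ range n,
          (if (2*k+l)*(1+lam)+lam*(m+1) ≤ r then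
            W.choose m * u.choose k * (n-k-(m+1)).choose l * 2^l else 0) := by
        refine Finset.sum_le_sum fun k _ => Finset.sum_le_sum fun l _ =>
          Finset.sum_le_sum fun m _ => ?_
        have heq : n - (k+1) - m = n - k - (m+1) := by omega
        rw [heq]
        split
        · rename_i hc
          rw [if_pos (by nlinarith)]
        · exact Nat.zero_le _
    _ ≤ ∑ k ∈ range (n+1), ∑ l ∈ range (n+1), ∑ m ∈ range n,
          (if (2*k+l)*(1+lam)+lam*(m+1) ≤ r then
            W.choose m * u.choose k * (n-k-(m+1)).choose l * 2^l else 0) := by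
        refine Finset.sum_le_sum_of_subset (by intro a ha; simp at ha ⊢; omega)
end

section
/- For any positive integer n, the largest size A_λ(n, 2λ+1) of a code C ⊆ F_2^n × F_2^n whose pairwise asymmetric Lee distances are all at least 2λ+1 satisfies A_λ(n, 2λ+1) ≤ 2^n(2^{n+1}−1)/(n+1). -/
open Finset

/-!
Swapping the two bits of a coordinate where they differ costs exactly `λ` and preserves the xor
vector `u = x.1 ⊕ x.2`. Around a codeword `x` with xor vector `u`, the words reachable by at most
one such swap form a set of `|u| + 1` words within distance `λ` of `x`. Since `d_λ` is a metric,
these sets are disjoint for codewords at distance `> 2λ`, and all of them lie in the fibre of `u`,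
which has `2^n` elements. Hence at most `2^n / (|u| + 1)` codewords have xor vector `u`, and
summing over `u` gives `2^n ∑ₖ C(n,k)/(k+1) = 2^n (2^(n+1) - 1)/(n+1)`.
-/

theorem sum_fun_bool_apply_card {α M : Type*} [Fintype α] [DecidableEq α] [AddCommMonoid M]
    (f : ℕ → M) :
    ∑ u : α → Bool, f #{i | u i = true} =
      ∑ k ∈ range (Fintype.card α + 1), (Fintype.card α).choose k • f k := by
  rw [← card_univ, ← sum_powerset_apply_card]
  refine sum_nbij' (fun u => ({i | u i = true} : Finset α)) (fun s i => i ∈ s) ?_ ?_ ?_ ?_ ?_ <;>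
    intros <;> simp

theorem sum_choose_div_add_one (K : Type*) [Field K] [CharZero K] (n : ℕ) :
    ∑ k ∈ range (n + 1), (n.choose k : K) / (k + 1) = (2 ^ (n + 1) - 1) / (n + 1) := by
  have hterm (k : ℕ) : (n.choose k : K) / (k + 1) = ((n + 1).choose (k + 1) : K) / (n + 1) := by
    rw [div_eq_div_iff (Nat.cast_add_one_ne_zero k) (Nat.cast_add_one_ne_zero n)]
    exact_mod_cast (mul_comm _ _).trans (Nat.add_one_mul_choose_eq n k)
  have hrow : ∑ k ∈ range (n + 1), ((n + 1).choose (k + 1) : K) + 1 = 2 ^ (n + 1) := by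
    exact_mod_cast (sum_range_succ' _ _).symm.trans (Nat.sum_range_choose (n + 1))
  rw [sum_congr rfl fun k _ => hterm k, ← sum_div, ← hrow, add_sub_cancel_right]

section Distance

variable (lam : ℕ)

theorem aldSym_self (a b : Bool) : aldSym lam a b a b = 0 := by
  cases a <;> cases b <;> simp [aldSym, ind] <;> ring

theorem aldSym_comm (a b c d : Bool) : aldSym lam a b c d = aldSym lam c d a b := by
  cases a <;> cases b <;> cases c <;> cases d <;> simp [aldSym, ind]

theorem aldSym_triangle (a b c d e f : Bool) :
    aldSym lam a b e f ≤ aldSym lam a b c d + aldSym lam c d e f := by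
  cases a <;> cases b <;> cases c <;> cases d <;> cases e <;> cases f <;>
    simp [aldSym, ind] <;> omega

theorem aldSym_swap {a b : Bool} (h : a ≠ b) : aldSym lam a b b a = lam := by
  cases a <;> cases b <;> simp_all [aldSym, ind]

variable {n : ℕ}

theorem ALD_self (x : (Fin n → Bool) × (Fin n → Bool)) : ALD lam n x x = 0 :=
  sum_eq_zero fun _ _ => aldSym_self lam _ _

theorem ALD_comm (x y : (Fin n → Bool) × (Fin n → Bool)) : ALD lam n x y = ALD lam n y x :=
  sum_congr rfl fun _ _ => aldSym_comm lam _ _ _ _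

theorem ALD_triangle (x y z : (Fin n → Bool) × (Fin n → Bool)) :
    ALD lam n x z ≤ ALD lam n x y + ALD lam n y z := by
  rw [ALD, ALD, ALD, ← sum_add_distrib]
  exact sum_le_sum fun _ _ => aldSym_triangle lam _ _ _ _ _ _

end Distance

section SwapBall

variable {n : ℕ}

def pairXor (x : (Fin n → Bool) × (Fin n → Bool)) (i : Fin n) : Bool :=
  xor (x.1 i) (x.2 i)

def swapAt (x : (Fin n → Bool) × (Fin n → Bool)) (i : Fin n) :
    (Fin n → Bool) × (Fin n → Bool) :=
  (Function.update x.1 i (x.2 i), Function.update x.2 i (x.1 i))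

/-- For `0 < λ`, the ball of radius `λ` around `x`: `x` and its single Class 1 transitions. -/
def swapBall (x : (Fin n → Bool) × (Fin n → Bool)) :
    Finset ((Fin n → Bool) × (Fin n → Bool)) :=
  insert x (({i | pairXor x i = true} : Finset (Fin n)).image (swapAt x))

theorem ALD_swapAt (lam : ℕ) (x : (Fin n → Bool) × (Fin n → Bool)) {i : Fin n}
    (hi : pairXor x i = true) : ALD lam n x (swapAt x i) = lam := by
  rw [ALD, Fintype.sum_eq_single i fun k hk => by simp [swapAt, hk, aldSym_self]]
  simpa [swapAt] using aldSym_swap lam (by simpa [pairXor] using hi)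

theorem ALD_le_of_mem_swapBall (lam : ℕ) {x z : (Fin n → Bool) × (Fin n → Bool)}
    (hz : z ∈ swapBall x) : ALD lam n x z ≤ lam := by
  simp only [swapBall, mem_insert, mem_image, mem_filter, mem_univ, true_and] at hz
  obtain rfl | ⟨i, hi, rfl⟩ := hz
  · simp [ALD_self]
  · rw [ALD_swapAt lam x hi]

theorem disjoint_swapBall {lam : ℕ} {x y : (Fin n → Bool) × (Fin n → Bool)}
    (hxy : 2 * lam < ALD lam n x y) : Disjoint (swapBall x) (swapBall y) := by
  refine disjoint_left.2 fun z hzx hzy => hxy.not_ge ?_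
  calc ALD lam n x y ≤ ALD lam n x z + ALD lam n y z :=
        ALD_comm lam y z ▸ ALD_triangle lam x z y
    _ ≤ 2 * lam := by
      linarith [ALD_le_of_mem_swapBall lam hzx, ALD_le_of_mem_swapBall lam hzy]

theorem pairXor_of_mem_swapBall {x z : (Fin n → Bool) × (Fin n → Bool)}
    (hz : z ∈ swapBall x) : pairXor z = pairXor x := by
  simp only [swapBall, mem_insert, mem_image] at hz
  obtain rfl | ⟨i, -, rfl⟩ := hz
  · rfl
  · funext k
    rcases eq_or_ne k i with rfl | hk
    · simp [pairXor, swapAt, Bool.xor_comm]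
    · simp [pairXor, swapAt, hk]

theorem card_swapBall (x : (Fin n → Bool) × (Fin n → Bool)) :
    #(swapBall x) = #{i | pairXor x i = true} + 1 := by
  have hmoved {i : Fin n} (hi : i ∈ ({i | pairXor x i = true} : Finset (Fin n))) :
      (swapAt x i).1 i ≠ x.1 i := by
    rw [mem_filter] at hi
    simp only [swapAt, Function.update_self]
    intro h
    simp [pairXor, h] at hi
  rw [swapBall, card_insert_of_notMem, card_image_of_injOn]
  · intro i hi j _ hij
    by_contra hne
    have hfix : (swapAt x j).1 i = x.1 i := by simp [swapAt, hne]
    exact hmoved hi (hij ▸ hfix)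
  · simp only [mem_image, not_exists, not_and]
    exact fun i hi hfix => hmoved hi (congrArg (fun y => y.1 i) hfix)

theorem card_pairXor_fiber (u : Fin n → Bool) :
    #{x : (Fin n → Bool) × (Fin n → Bool) | pairXor x = u} = 2 ^ n := by
  rw [show 2 ^ n = #(univ : Finset (Fin n → Bool)) by simp]
  refine card_nbij' Prod.fst (fun a => (a, fun i => xor (a i) (u i))) ?_ ?_ ?_ ?_ <;>
    intro x hx
  · simp
  · simpa using funext fun i => show pairXor (x, _) i = u i by simp [pairXor]
  · obtain rfl : pairXor x = u := by simpa using hx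
    simp [pairXor]
  · rfl

end SwapBall

theorem card_code_fiber_mul_le {lam n : ℕ} (C : Finset ((Fin n → Bool) × (Fin n → Bool)))
    (hC : (C : Set ((Fin n → Bool) × (Fin n → Bool))).Pairwise
      fun x y => 2 * lam < ALD lam n x y)
    (u : Fin n → Bool) :
    #{x ∈ C | pairXor x = u} * (#{i | u i = true} + 1) ≤ 2 ^ n := by
  set S := {x ∈ C | pairXor x = u}
  have hdisj : (S : Set _).PairwiseDisjoint swapBall := fun x hx y hy hxy =>
    disjoint_swapBall (hC (mem_filter.1 hx).1 (mem_filter.1 hy).1 hxy)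
  calc #S * (#{i | u i = true} + 1) = ∑ x ∈ S, #(swapBall x) := by
        rw [sum_const_nat fun x hx => by rw [card_swapBall, (mem_filter.1 hx).2]]
    _ = #(S.biUnion swapBall) := (card_biUnion hdisj).symm
    _ ≤ #{x | pairXor x = u} := card_le_card fun z hz => by
        obtain ⟨x, hx, hzx⟩ := mem_biUnion.1 hz
        simpa [pairXor_of_mem_swapBall hzx] using (mem_filter.1 hx).2
    _ = 2 ^ n := card_pairXor_fiber u

theorem ald_code_upper_bound_general (lam n : ℕ)
    (C : Finset ((Fin n → Bool) × (Fin n → Bool)))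
    (hC : ∀ x ∈ C, ∀ y ∈ C, x ≠ y → (2 * lam + 1 : ℤ) ≤ ALD lam n x y) :
    (C.card : ℚ) ≤ 2 ^ n * (2 ^ (n + 1) - 1) / (n + 1) := by
  have hfiber (u : Fin n → Bool) :
      (#{x ∈ C | pairXor x = u} : ℚ) ≤ 2 ^ n * (1 / (#{i | u i = true} + 1)) := by
    rw [mul_one_div, le_div_iff₀ (by positivity)]
    exact_mod_cast card_code_fiber_mul_le C (fun x hx y hy hxy => hC x hx y hy hxy) u
  calc (C.card : ℚ) = ∑ u, (#{x ∈ C | pairXor x = u} : ℚ) := by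
        exact_mod_cast card_eq_sum_card_fiberwise fun x _ => mem_univ (pairXor x)
    _ ≤ ∑ u : Fin n → Bool, 2 ^ n * (1 / (#{i | u i = true} + 1) : ℚ) :=
        sum_le_sum fun u _ => hfiber u
    _ = 2 ^ n * (2 ^ (n + 1) - 1) / (n + 1) := by
        rw [← mul_sum, sum_fun_bool_apply_card (fun k => (1 : ℚ) / (k + 1)), Fintype.card_fin]
        simp only [nsmul_eq_mul, mul_one_div]
        rw [sum_choose_div_add_one, mul_div_assoc]

theorem ald_code_upper_bound (lam n : ℕ) (hlam : 0 < lam) (hn : 0 < n)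
    (C : Finset ((Fin n → Bool) × (Fin n → Bool)))
    (hC : ∀ x ∈ C, ∀ y ∈ C, x ≠ y → (2 * lam + 1 : ℤ) ≤ ALD lam n x y) :
    (C.card : ℚ) ≤ 2 ^ n * (2 ^ (n + 1) - 1) / (n + 1) :=
  ald_code_upper_bound_general lam n C hC
end

section
/- Let M ∈ R^{n×n} have nonnegative entries with strictly positive diagonal, and let b ∈ R^n with strictly positive entries. If for all i, b_i > Σ_{j≠i} m_{ij}·b_j/m_{jj}, then M is invertible and all entries of M^{−1}b are nonnegative. -/
/-!
Scaling the columns of `M` by `d j = b j / M j j` gives `A = M * diagonal d`, whose diagonal is `b`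
and which is strictly row diagonally dominant by hypothesis; hence `A`, and so `M`, is invertible
(Gershgorin). Writing `M⁻¹ b = diagonal d * y`, the vector `y` solves `A y = b`. At an index `p`
where `|y p - 1/2|` is maximal, the `p`-th row of `A (y - 1/2) = (b - offdiagonal row sums) / 2`
forces `|y p - 1/2| ≤ 1/2`, so every `y j` lies in `[0, 1]`.
-/

open Finset Matrix

namespace Matrix

variable {ι : Type*} [Fintype ι] [DecidableEq ι]

theorem mulVec_apply_eq_diag_add_sum_erase {R : Type*} [NonUnitalNonAssocSemiring R]
    (A : Matrix ι ι R) (y : ι → R) (i : ι) :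
    (A *ᵥ y) i = A i i * y i + ∑ j ∈ univ.erase i, A i j * y j := by
  rw [mulVec, dotProduct]
  exact (add_sum_erase _ _ (mem_univ i)).symm

theorem nonneg_of_mulVec_eq_diag {A : Matrix ι ι ℝ} (hA : ∀ i j, i ≠ j → 0 ≤ A i j)
    (hdom : ∀ i, ∑ j ∈ univ.erase i, A i j < A i i) {y : ι → ℝ}
    (hy : A *ᵥ y = fun i ↦ A i i) (i : ι) : 0 ≤ y i := by
  obtain ⟨p, -, hp⟩ := exists_max_image univ (fun j ↦ |y j - 1 / 2|) ⟨i, mem_univ i⟩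
  set T := |y p - 1 / 2|
  set S := ∑ j ∈ univ.erase p, A p j
  set E := ∑ j ∈ univ.erase p, A p j * (y j - 1 / 2)
  have hoff : ∀ j ∈ univ.erase p, 0 ≤ A p j := fun j hj ↦ hA p j (ne_of_mem_erase hj).symm
  have hrow : A p p * y p + ∑ j ∈ univ.erase p, A p j * y j = A p p := by
    rw [← mulVec_apply_eq_diag_add_sum_erase, hy]
  have hE : E = ∑ j ∈ univ.erase p, A p j * y j - S / 2 := by
    simp only [E, S, mul_sub, sum_sub_distrib, sum_div, mul_one_div]
  have hE_le : |E| ≤ S * T := by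
    rw [sum_mul]
    refine (abs_sum_le_sum_abs _ _).trans (sum_le_sum fun j hj ↦ ?_)
    rw [abs_mul, abs_of_nonneg (hoff j hj)]
    exact mul_le_mul_of_nonneg_left (hp j (mem_univ j)) (hoff j hj)
  have hS : 0 ≤ S := sum_nonneg hoff
  have hApp : 0 < A p p := hS.trans_lt (hdom p)
  have hT : A p p * T ≤ (A p p - S) / 2 + S * T := by
    calc A p p * T = |A p p * (y p - 1 / 2)| := by rw [abs_mul, abs_of_pos hApp]
      _ = |(A p p - S) / 2 - E| := by congr 1; linarith
      _ ≤ (A p p - S) / 2 + |E| := by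
          refine (abs_sub _ _).trans ?_
          rw [abs_of_nonneg (by linarith [hdom p])]
      _ ≤ (A p p - S) / 2 + S * T := by linarith
  have hT_half : T ≤ 1 / 2 := by nlinarith [hdom p]
  linarith [(abs_le.mp ((hp i (mem_univ i)).trans hT_half)).1]

end Matrix

theorem diagonally_dominant_inverse_nonneg (n : ℕ)
    (M : Matrix (Fin n) (Fin n) ℝ) (b : Fin n → ℝ)
    (hM : ∀ i j, 0 ≤ M i j) (hdiag : ∀ i, 0 < M i i) (hb : ∀ i, 0 < b i)
    (h : ∀ i, ∑ j ∈ Finset.univ.erase i, M i j * b j / M j j < b i) :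
    IsUnit M ∧ ∀ i, 0 ≤ M⁻¹.mulVec b i := by
  set d : Fin n → ℝ := fun j ↦ b j / M j j
  have hd : ∀ j, 0 < d j := fun j ↦ div_pos (hb j) (hdiag j)
  have hA : ∀ i j, (M * diagonal d) i j = M i j * b j / M j j := fun i j ↦ by
    rw [mul_diagonal, mul_div_assoc]
  set A := M * diagonal d
  have hAdiag : ∀ i, A i i = b i := fun i ↦ by rw [hA, mul_div_cancel_left₀ _ (hdiag i).ne']
  have hAnonneg : ∀ i j, 0 ≤ A i j := fun i j ↦ by
    rw [hA]; exact div_nonneg (mul_nonneg (hM i j) (hb j).le) (hdiag j).le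
  have hdom : ∀ i, ∑ j ∈ univ.erase i, A i j < A i i := fun i ↦ by
    rw [hAdiag]; simpa only [hA] using h i
  have hAdet : A.det ≠ 0 := det_ne_zero_of_sum_row_lt_diag fun i ↦ by
    simpa only [Real.norm_of_nonneg (hAnonneg _ _)] using hdom i
  have hMdet : IsUnit M.det := isUnit_iff_ne_zero.mpr (left_ne_zero_of_mul (det_mul M _ ▸ hAdet))
  refine ⟨(isUnit_iff_isUnit_det M).mpr hMdet, fun i ↦ ?_⟩
  set x := M⁻¹ *ᵥ b
  have hy : A *ᵥ (fun j ↦ x j / d j) = fun i ↦ A i i := by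
    have : diagonal d *ᵥ (fun j ↦ x j / d j) = x := by
      ext j; rw [mulVec_diagonal, mul_div_cancel₀ _ (hd j).ne']
    rw [← mulVec_mulVec, this, mulVec_mulVec, mul_nonsing_inv _ hMdet, one_mulVec]
    exact funext fun i ↦ (hAdiag i).symm
  have hyi := nonneg_of_mulVec_eq_diag (fun i j _ ↦ hAnonneg i j) hdom hy i
  simpa using (le_div_iff₀ (hd i)).mp hyi
end

section
/- Let v ≥ 2 and n = 2^v − 2, let h_1,...,h_n be an enumeration of all nonzero vectors of F_2^v except the all-ones vector 1_v, and let C_l(n) = {(a;b) ∈ F_2^n × F_2^n : Σ_i a_i·h_i + Σ_i b_i·1_v = 0}. Then the minimum asymmetric Lee distance of C_l(n) with λ = 1 is at least 3; equivalently, any two distinct codewords of C_l(n) are at ALD (λ=1) at least 3. -/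
open Finset

lemma aldSym_one (a b c d : Bool) :
    aldSym 1 a b c d =
      2 * ind (a ≠ c) + 2 * ind (b ≠ d) - 3 * ind (a ≠ c ∧ b ≠ d ∧ a ≠ b) := by
  revert a b c d; decide

lemma sum_ind {n : ℕ} (P : Fin n → Prop) [DecidablePred P] :
    ∑ i, ind (P i) = ((univ.filter P).card : ℤ) := by
  simp [ind, Finset.sum_boole]

theorem linear_code_ald_ge_three (v : ℕ) (hv : 2 ≤ v) (n : ℕ) (hn : n = 2 ^ v - 2)
    (h : Fin n → (Fin v → ZMod 2))
    (hinj : Function.Injective h)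
    (h0 : ∀ i, h i ≠ 0)
    (h1 : ∀ i, h i ≠ fun _ => 1)
    (hall : ∀ u : Fin v → ZMod 2, u ≠ 0 → u ≠ (fun _ => 1) → ∃ i, h i = u)
    (x y : (Fin n → Bool) × (Fin n → Bool))
    (hx : (∑ i, if x.1 i then h i else (0 : Fin v → ZMod 2)) +
          (∑ i, if x.2 i then (fun _ => (1 : ZMod 2)) else (0 : Fin v → ZMod 2)) = 0)
    (hy : (∑ i, if y.1 i then h i else (0 : Fin v → ZMod 2)) +
          (∑ i, if y.2 i then (fun _ => (1 : ZMod 2)) else (0 : Fin v → ZMod 2)) = 0)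
    (hxy : x ≠ y) :
    (3 : ℤ) ≤ ALD 1 n x y := by
  classical
  by_contra hlt
  push_neg at hlt
  have hlt2 : ALD 1 n x y ≤ 2 := by omega
  set S := univ.filter (fun i => x.1 i ≠ y.1 i) with hSdef
  set T := univ.filter (fun i => x.2 i ≠ y.2 i) with hTdef
  set F := univ.filter (fun i => x.1 i ≠ y.1 i ∧ x.2 i ≠ y.2 i ∧ x.1 i ≠ x.2 i) with hFdef
  have htwo : ∀ z : Fin v → ZMod 2, z + z = 0 := fun z => by
    funext k; exact CharTwo.add_self_eq_zero _
  -- exact formula for ALD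
  have hALD : ALD 1 n x y = 2 * S.card + 2 * T.card - 3 * F.card := by
    unfold ALD
    calc ∑ i, aldSym 1 (x.1 i) (x.2 i) (y.1 i) (y.2 i)
        = ∑ i, (2 * ind (x.1 i ≠ y.1 i) + 2 * ind (x.2 i ≠ y.2 i)
            - 3 * ind (x.1 i ≠ y.1 i ∧ x.2 i ≠ y.2 i ∧ x.1 i ≠ x.2 i)) := by
          exact Finset.sum_congr rfl fun i _ => aldSym_one _ _ _ _
      _ = 2 * (∑ i, ind (x.1 i ≠ y.1 i)) + 2 * (∑ i, ind (x.2 i ≠ y.2 i))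
            - 3 * (∑ i, ind (x.1 i ≠ y.1 i ∧ x.2 i ≠ y.2 i ∧ x.1 i ≠ x.2 i)) := by
          rw [Finset.sum_sub_distrib, Finset.sum_add_distrib,
            Finset.mul_sum, Finset.mul_sum, Finset.mul_sum]
      _ = _ := by rw [sum_ind, sum_ind, sum_ind]
  -- key linear-algebra equation
  have hkey : (∑ i ∈ S, h i) + (T.card) • (fun _ => (1 : ZMod 2)) = 0 := by
    have hsum : ((∑ i, if x.1 i then h i else (0 : Fin v → ZMod 2)) +
          (∑ i, if x.2 i then (fun _ => (1 : ZMod 2)) else (0 : Fin v → ZMod 2))) +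
        ((∑ i, if y.1 i then h i else (0 : Fin v → ZMod 2)) +
          (∑ i, if y.2 i then (fun _ => (1 : ZMod 2)) else (0 : Fin v → ZMod 2))) = 0 := by
      rw [hx, hy, add_zero]
    have e1 : (∑ i, if x.1 i then h i else (0 : Fin v → ZMod 2)) +
        (∑ i, if y.1 i then h i else (0 : Fin v → ZMod 2)) = ∑ i ∈ S, h i := by
      rw [← Finset.sum_add_distrib, hSdef, Finset.sum_filter]
      refine Finset.sum_congr rfl fun i _ => ?_
      cases hxi : x.1 i <;> cases hyi : y.1 i <;> simp [htwo]
    have e2 : (∑ i, if x.2 i then (fun _ => (1 : ZMod 2)) else (0 : Fin v → ZMod 2)) +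
        (∑ i, if y.2 i then (fun _ => (1 : ZMod 2)) else (0 : Fin v → ZMod 2)) =
        (T.card) • (fun _ => (1 : ZMod 2)) := by
      rw [← Finset.sum_add_distrib, ← Finset.sum_const, hTdef, Finset.sum_filter]
      refine Finset.sum_congr rfl fun i _ => ?_
      cases hxi : x.2 i <;> cases hyi : y.2 i <;> simp [htwo]
    calc (∑ i ∈ S, h i) + (T.card) • (fun _ => (1 : ZMod 2))
        = ((∑ i, if x.1 i then h i else (0 : Fin v → ZMod 2)) +
            (∑ i, if x.2 i then (fun _ => (1 : ZMod 2)) else (0 : Fin v → ZMod 2))) +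
          ((∑ i, if y.1 i then h i else (0 : Fin v → ZMod 2)) +
            (∑ i, if y.2 i then (fun _ => (1 : ZMod 2)) else (0 : Fin v → ZMod 2))) := by
          rw [← e1, ← e2]; abel
      _ = 0 := hsum
  -- nonemptiness
  have hcard1 : 1 ≤ S.card + T.card := by
    by_contra hc
    push_neg at hc
    have hS0 : S = ∅ := Finset.card_eq_zero.mp (by omega)
    have hT0 : T = ∅ := Finset.card_eq_zero.mp (by omega)
    apply hxy
    have hx1 : x.1 = y.1 := by
      funext i
      by_contra hne
      have : i ∈ S := by simp [hSdef, hne]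
      rw [hS0] at this; simp at this
    have hx2 : x.2 = y.2 := by
      funext i
      by_contra hne
      have : i ∈ T := by simp [hTdef, hne]
      rw [hT0] at this; simp at this
    exact Prod.ext hx1 hx2
  have hFS : F ⊆ S := by
    intro i hi
    simp only [hFdef, hSdef, Finset.mem_filter, Finset.mem_univ, true_and] at *
    exact hi.1
  have hFT : F ⊆ T := by
    intro i hi
    simp only [hFdef, hTdef, Finset.mem_filter, Finset.mem_univ, true_and] at *
    exact hi.2.1
  have hcases : (S.card = 1 ∧ T.card = 0) ∨ (S.card = 0 ∧ T.card = 1)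
      ∨ (S.card = 1 ∧ T.card = 1 ∧ F.card = 1)
      ∨ (S.card = 2 ∧ T.card = 2 ∧ F.card = 2) := by
    have hc1 := Finset.card_le_card hFS
    have hc2 := Finset.card_le_card hFT
    have hc3 : 2 * (S.card : ℤ) + 2 * T.card - 3 * F.card ≤ 2 := by
      rw [← hALD]; exact hlt2
    omega
  rcases hcases with ⟨hSc, hTc⟩ | ⟨hSc, hTc⟩ | ⟨hSc, hTc, hFc⟩ | ⟨hSc, hTc, hFc⟩
  · -- single bit change in first part: h i = 0
    obtain ⟨i, hSi⟩ := Finset.card_eq_one.mp hSc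
    rw [hSi, Finset.sum_singleton, hTc, zero_smul, add_zero] at hkey
    exact h0 i hkey
  · -- single bit change in second part: all-ones = 0
    have hS0 : S = ∅ := Finset.card_eq_zero.mp hSc
    rw [hS0, Finset.sum_empty, hTc, zero_add, one_smul] at hkey
    have := congrFun hkey ⟨0, by omega⟩
    simp at this
  · -- one flip: h i = all-ones
    obtain ⟨i, hSi⟩ := Finset.card_eq_one.mp hSc
    rw [hSi, Finset.sum_singleton, hTc, one_smul] at hkey
    apply h1 i
    have heq : h i = -(fun _ => (1 : ZMod 2)) := eq_neg_of_add_eq_zero_left hkey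
    rw [heq]
    funext k
    simp [CharTwo.neg_eq]
  · -- two flips: h i = h j
    have hSF : F = S := Finset.eq_of_subset_of_card_le hFS (by omega)
    have hTF : F = T := Finset.eq_of_subset_of_card_le hFT (by omega)
    obtain ⟨i, j, hij, hSij⟩ := Finset.card_eq_two.mp hSc
    rw [hSij, Finset.sum_pair hij, hTc] at hkey
    have h2one : (2 : ℕ) • (fun _ => (1 : ZMod 2)) = (0 : Fin v → ZMod 2) := by
      funext k; simp [two_smul]
      decide
    rw [h2one, add_zero] at hkey
    have heq : h i = h j := by
      have h' : h i = -(h j) := eq_neg_of_add_eq_zero_left hkey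
      rw [h']
      funext k
      simp [CharTwo.neg_eq]
    exact hij (hinj heq)
end

section
/- Let H = (h'_1,...,h'_{2n}) ∈ F_2^{s×2n} be a parity-check matrix of a binary code with minimum Hamming distance d ≥ 4, and define C_L(n) = {(a;b) ∈ F_2^n × F_2^n : Σ_{i=1}^n a_i·h'_i + Σ_{i=1}^n b_i·(h'_i + h'_{n+i}) = 0}. Then any two distinct codewords of C_L(n) have asymmetric Lee distance (with λ=1) at least d. -/
open Finset

private lemma keyALD : ∀ a b c d : Bool,
    (if ((if a then (1:ZMod 2) else 0) + (if c then 1 else 0) + (if b then 1 else 0)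
        + (if d then 1 else 0) ≠ 0) then (1:ℤ) else 0)
  + (if ((if b then (1:ZMod 2) else 0) + (if d then 1 else 0) ≠ 0) then (1:ℤ) else 0)
  ≤ aldSym 1 a b c d := by decide

private lemma ifsmul {s : ℕ} (p : Bool) (v : Fin s → ZMod 2) :
    (if p then v else 0) = (if p then (1:ZMod 2) else 0) • v := by cases p <;> simp

theorem linear_code_ald_ge_d (n s d : ℕ) (hn : 0 < n) (hd : 4 ≤ d)
    (h' : Fin (n + n) → Fin s → ZMod 2)
    (hH : ∀ e : Fin (n + n) → ZMod 2, e ≠ 0 →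
      (Finset.univ.filter fun i => e i ≠ 0).card < d → ∑ i, e i • h' i ≠ 0)
    (x y : (Fin n → Bool) × (Fin n → Bool))
    (hx : (∑ i : Fin n, if x.1 i then h' (Fin.castAdd n i) else (0 : Fin s → ZMod 2)) +
          (∑ i : Fin n, if x.2 i then h' (Fin.castAdd n i) + h' (Fin.natAdd n i)
            else (0 : Fin s → ZMod 2)) = 0)
    (hy : (∑ i : Fin n, if y.1 i then h' (Fin.castAdd n i) else (0 : Fin s → ZMod 2)) +
          (∑ i : Fin n, if y.2 i then h' (Fin.castAdd n i) + h' (Fin.natAdd n i)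
            else (0 : Fin s → ZMod 2)) = 0)
    (hxy : x ≠ y) :
    (d : ℤ) ≤ ALD 1 n x y := by
  classical
  set iA : Bool → ZMod 2 := fun p => if p then 1 else 0 with hiA
  set e : Fin (n + n) → ZMod 2 := Fin.addCases
      (fun i => iA (x.1 i) + iA (y.1 i) + iA (x.2 i) + iA (y.2 i))
      (fun i => iA (x.2 i) + iA (y.2 i)) with he
  have eL : ∀ i : Fin n, e (Fin.castAdd n i)
      = iA (x.1 i) + iA (y.1 i) + iA (x.2 i) + iA (y.2 i) := by
    intro i; simp only [he]; exact Fin.addCases_left i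
  have eR : ∀ i : Fin n, e (Fin.natAdd n i) = iA (x.2 i) + iA (y.2 i) := by
    intro i; simp only [he]; exact Fin.addCases_right i
  -- rewrite hypotheses with smul
  simp only [ifsmul] at hx hy
  -- syndrome of e is zero
  have hsum : ∑ i, e i • h' i = 0 := by
    rw [Fin.sum_univ_add, ← Finset.sum_add_distrib]
    have expand : ∀ i : Fin n,
        e (Fin.castAdd n i) • h' (Fin.castAdd n i)
          + e (Fin.natAdd n i) • h' (Fin.natAdd n i)
        = (iA (x.1 i) • h' (Fin.castAdd n i)
            + iA (x.2 i) • (h' (Fin.castAdd n i) + h' (Fin.natAdd n i)))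
          + (iA (y.1 i) • h' (Fin.castAdd n i)
            + iA (y.2 i) • (h' (Fin.castAdd n i) + h' (Fin.natAdd n i))) := by
      intro i
      rw [eL, eR]
      module
    rw [Finset.sum_congr rfl fun i _ => expand i, Finset.sum_add_distrib,
      Finset.sum_add_distrib, Finset.sum_add_distrib, hx]
    -- remaining: 0 + (sum for y) = 0
    rw [zero_add]
    rw [← Finset.sum_add_distrib] at hy ⊢
    exact hy
  -- e is nonzero
  have hne : e ≠ 0 := by
    intro h0
    apply hxy
    have hz : ∀ i : Fin n, x.1 i = y.1 i ∧ x.2 i = y.2 i := by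
      intro i
      have h1 := congrFun h0 (Fin.castAdd n i)
      have h2 := congrFun h0 (Fin.natAdd n i)
      rw [eL] at h1
      rw [eR] at h2
      simp only [Pi.zero_apply, hiA] at h1 h2
      revert h1 h2
      cases hx1 : x.1 i <;> cases hx2 : x.2 i <;> cases hy1 : y.1 i <;> cases hy2 : y.2 i <;>
        simp <;> decide
    have := fun i => (hz i).1
    have := fun i => (hz i).2
    exact Prod.ext (funext fun i => (hz i).1) (funext fun i => (hz i).2)
  -- weight bound
  have hw : d ≤ (Finset.univ.filter fun i => e i ≠ 0).card :=
    le_of_not_gt fun hlt => hH e hne hlt hsum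
  have hcard : ((Finset.univ.filter fun i => e i ≠ 0).card : ℤ)
      = ∑ i : Fin (n + n), (if e i ≠ 0 then (1:ℤ) else 0) := by
    rw [Finset.card_filter]
    push_cast
    rfl
  have hle : ((Finset.univ.filter fun i => e i ≠ 0).card : ℤ) ≤ ALD 1 n x y := by
    rw [hcard, Fin.sum_univ_add, ← Finset.sum_add_distrib]
    apply Finset.sum_le_sum
    intro i _
    rw [eL, eR]
    exact keyALD (x.1 i) (x.2 i) (y.1 i) (y.2 i)
  calc (d : ℤ) ≤ ((Finset.univ.filter fun i => e i ≠ 0).card : ℤ) := by exact_mod_cast hw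
    _ ≤ ALD 1 n x y := hle
end

section
/- Let q be an odd prime with q ≥ d+1, d odd, n = q^ℓ − 1, and α a primitive element of F_{q^ℓ}. Map φ: F_2×F_2 → {0,1,2,3} by (0;0)↦0, (0;1)↦1, (1;0)↦2, (1;1)↦3. For u ∈ Z_d and z ∈ F_{q^ℓ}^{⌊d/2⌋}, the code C_N(n,u,z) = {(a;b) : Σ_i φ(a_i;b_i) ≡ u (mod d), and Σ_i φ(a_i;b_i)·α^{ik} = z_k for k = 1,...,⌊d/2⌋} has minimum asymmetric Lee distance (λ=1) at least d. -/
open Finset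

def phi (a b : Bool) : ℕ := (if a then 2 else 0) + (if b then 1 else 0)

/-!
The asymmetric Lee distance dominates the ℓ¹-distance of the φ-images, so two distinct codewords
at distance `< d` give a nonzero integer vector `e` with `∑ |eᵢ| < d`. The first congruence forces
`∑ eᵢ = 0`, so the positive and negative parts of `e` have the same mass `N ≤ ⌊d/2⌋ < q`. Read as
multisets of locators `α^(i+1)` with multiplicities, these two parts have equal power sums of
orders `1, …, N`. By Newton's identities, in which `1, …, N` are invertible since `N < q`, they
have equal elementary symmetric functions, hence are equal, which forces `e = 0`.
-/

namespace Multiset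

variable {R : Type*}

theorem mul_esymm_eq_sum [CommRing R] (s : Multiset R) (k : ℕ) :
    (k : R) * s.esymm k = (-1) ^ (k + 1) *
      ∑ a ∈ HasAntidiagonal.antidiagonal k with a.1 < k,
        (-1) ^ a.1 * s.esymm a.1 * (s.map (· ^ a.2)).sum := by
  have h := congrArg (MvPolynomial.aeval s.toList.get) (MvPolynomial.mul_esymm_eq_sum (Fin _) R k)
  have hs : (univ.val.map s.toList.get : Multiset R) = s := by
    rw [Fin.univ_val_map, List.ofFn_get, coe_toList]
  have hp (m : ℕ) : ∑ i, s.toList.get i ^ m = (s.map (· ^ m)).sum := by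
    conv_rhs => rw [← hs, map_map]
    rfl
  simpa only [map_mul, map_sum, map_pow, map_neg, map_one, map_natCast,
    MvPolynomial.aeval_esymm_eq_multiset_esymm, MvPolynomial.psum, MvPolynomial.aeval_X, hs, hp]
    using h

theorem esymm_eq_of_sum_map_pow_eq [CommRing R] [IsDomain R] {p : ℕ} [CharP R p]
    {s t : Multiset R} {N : ℕ} (hN : N < p)
    (h : ∀ k, 0 < k → k ≤ N → (s.map (· ^ k)).sum = (t.map (· ^ k)).sum) :
    ∀ k ≤ N, s.esymm k = t.esymm k := by
  intro k
  induction k using Nat.strong_induction_on with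
  | _ k ih =>
    intro hk
    rcases k with _ | k
    · simp [esymm]
    have hk0 : ((k + 1 : ℕ) : R) ≠ 0 := by
      rw [Ne, CharP.cast_eq_zero_iff R p]
      exact fun hdvd => by have := Nat.le_of_dvd k.succ_pos hdvd; omega
    refine mul_left_cancel₀ hk0 ?_
    rw [mul_esymm_eq_sum, mul_esymm_eq_sum]
    congr 1
    refine Finset.sum_congr rfl fun a ha => ?_
    rw [Finset.mem_filter, Finset.HasAntidiagonal.mem_antidiagonal] at ha
    rw [ih a.1 ha.2 (by omega), h a.2 (by omega) (by omega)]

theorem eq_of_card_eq_of_esymm_eq [CommRing R] [IsDomain R] {s t : Multiset R}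
    (hcard : card s = card t) (h : ∀ k ≤ card s, s.esymm k = t.esymm k) : s = t := by
  rw [← Polynomial.roots_multiset_prod_X_sub_C s, ← Polynomial.roots_multiset_prod_X_sub_C t,
    prod_X_sub_X_eq_sum_esymm, prod_X_sub_X_eq_sum_esymm, ← hcard]
  refine congrArg _ (Finset.sum_congr rfl fun k hk => ?_)
  rw [h k (Nat.lt_succ_iff.mp (Finset.mem_range.mp hk))]

theorem eq_of_sum_map_pow_eq [CommRing R] [IsDomain R] {p : ℕ} [CharP R p] {s t : Multiset R}
    (hcard : card s = card t) (hp : card s < p)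
    (h : ∀ k, 0 < k → k ≤ card s → (s.map (· ^ k)).sum = (t.map (· ^ k)).sum) : s = t :=
  eq_of_card_eq_of_esymm_eq hcard (esymm_eq_of_sum_map_pow_eq hp h)

end Multiset

theorem eq_of_sum_mul_pow_eq {ι F : Type*} [Fintype ι] [Field F] {p : ℕ} [CharP F p]
    {β : ι → F} (hβ : Function.Injective β) {w w' : ι → ℕ} (hcard : ∑ i, w i = ∑ i, w' i)
    (hp : ∑ i, w i < p)
    (h : ∀ k, 0 < k → k ≤ ∑ i, w i → ∑ i, (w i : F) * β i ^ k = ∑ i, (w' i : F) * β i ^ k) :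
    w = w' := by
  classical
  set A : (ι → ℕ) → Multiset F := fun v => ∑ i, Multiset.replicate (v i) (β i)
  have hcardA (v : ι → ℕ) : Multiset.card (A v) = ∑ i, v i := by simp [A]
  have hsumA (v : ι → ℕ) (k : ℕ) : ((A v).map (· ^ k)).sum = ∑ i, (v i : F) * β i ^ k := by
    rw [← Multiset.coe_mapAddMonoidHom, map_sum, ← Multiset.coe_sumAddMonoidHom, map_sum]
    simp
  have hcountA (v : ι → ℕ) (i : ι) : (A v).count (β i) = v i := by
    simp [A, Multiset.count_sum', Multiset.count_replicate, hβ.eq_iff]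
  have hA : A w = A w' := Multiset.eq_of_sum_map_pow_eq (by rw [hcardA, hcardA, hcard])
    (by rwa [hcardA]) (by simpa only [hcardA, hsumA] using h)
  funext i
  rw [← hcountA w i, hA, hcountA]

theorem eq_zero_of_sum_mul_pow_eq_zero {ι F : Type*} [Fintype ι] [Field F] {p : ℕ} [CharP F p]
    {β : ι → F} (hβ : Function.Injective β) {e : ι → ℤ} {m : ℕ} (hm : m < p)
    (hsum : ∑ i, e i = 0) (habs : ∑ i, |e i| ≤ 2 * m)
    (h : ∀ k, 0 < k → k ≤ m → ∑ i, (e i : F) * β i ^ k = 0) : e = 0 := by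
  set w : ι → ℕ := fun i => (e i).toNat
  set w' : ι → ℕ := fun i => (-e i).toNat
  have he (i : ι) : (w i : ℤ) - w' i = e i := Int.toNat_sub_toNat_neg _
  have hcard : ∑ i, w i = ∑ i, w' i := by
    zify
    rw [← sub_eq_zero, ← sum_sub_distrib]
    simpa only [he] using hsum
  have hwm : ∑ i, w i ≤ m := by
    have : ∑ i, |e i| = ∑ i, (w i : ℤ) + ∑ i, (w' i : ℤ) := by
      rw [← sum_add_distrib]
      exact sum_congr rfl fun i _ => by rw [abs_eq_max_neg]; simp only [w, w']; omega
    zify at hcard ⊢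
    omega
  have hw : w = w' := eq_of_sum_mul_pow_eq hβ hcard (hwm.trans_lt hm) fun k hk hkw => by
    rw [← sub_eq_zero, ← sum_sub_distrib]
    simpa only [← sub_mul, ← he, Int.cast_sub, Int.cast_natCast] using h k hk (hkw.trans hwm)
  funext i
  rw [← he i, hw, sub_self, Pi.zero_apply]

theorem pow_succ_injective {M : Type*} [Monoid M] {x : M} {n : ℕ} (hn : n ≤ orderOf x) :
    Function.Injective fun i : Fin n => x ^ ((i : ℕ) + 1) := by
  intro i j (hij : x ^ ((i : ℕ) + 1) = x ^ ((j : ℕ) + 1))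
  have hx : IsOfFinOrder x := orderOf_pos_iff.mp (i.pos.trans_le hn)
  have hmod := Nat.ModEq.add_right_cancel' 1 (hx.pow_eq_pow_iff_modEq.mp hij)
  rwa [Nat.ModEq, Nat.mod_eq_of_lt (i.2.trans_le hn), Nat.mod_eq_of_lt (j.2.trans_le hn),
    Fin.val_inj] at hmod

theorem phi_injective : ∀ a b c d : Bool, phi a b = phi c d → a = c ∧ b = d := by decide

theorem abs_phi_sub_phi_le_aldSym :
    ∀ a b c d : Bool, |(phi a b : ℤ) - phi c d| ≤ aldSym 1 a b c d := by decide

theorem sum_abs_phi_sub_phi_le_ALD {n : ℕ} (x y : (Fin n → Bool) × (Fin n → Bool)) :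
    ∑ i, |(phi (x.1 i) (x.2 i) : ℤ) - phi (y.1 i) (y.2 i)| ≤ ALD 1 n x y :=
  sum_le_sum fun _ _ => abs_phi_sub_phi_le_aldSym _ _ _ _

theorem eq_of_phi_eq {n : ℕ} {x y : (Fin n → Bool) × (Fin n → Bool)}
    (h : ∀ i, phi (x.1 i) (x.2 i) = phi (y.1 i) (y.2 i)) : x = y :=
  Prod.ext (funext fun i => (phi_injective _ _ _ _ (h i)).1)
    (funext fun i => (phi_injective _ _ _ _ (h i)).2)

theorem bch_like_code_ald_ge_d_general (q l d : ℕ) (hq : q.Prime)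
    (hqd : d + 1 ≤ q)
    (n : ℕ) (hn : n = q ^ l - 1)
    (F : Type) [Field F] [Fintype F] (hF : Fintype.card F = q ^ l)
    (α : F) (hα : orderOf α = q ^ l - 1)
    (u : ℕ) (z : Fin (d / 2) → F)
    (x y : (Fin n → Bool) × (Fin n → Bool))
    (hx1 : (∑ i, phi (x.1 i) (x.2 i)) % d = u)
    (hx2 : ∀ k : Fin (d / 2),
      ∑ i : Fin n, (phi (x.1 i) (x.2 i) : F) * α ^ (((i : ℕ) + 1) * ((k : ℕ) + 1)) = z k)
    (hy1 : (∑ i, phi (y.1 i) (y.2 i)) % d = u)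
    (hy2 : ∀ k : Fin (d / 2),
      ∑ i : Fin n, (phi (y.1 i) (y.2 i) : F) * α ^ (((i : ℕ) + 1) * ((k : ℕ) + 1)) = z k)
    (hxy : x ≠ y) :
    (d : ℤ) ≤ ALD 1 n x y := by
  by_contra! hlt
  have : Fact q.Prime := ⟨hq⟩
  have : CharP F q := charP_of_card_eq_prime_pow hF
  set e : Fin n → ℤ := fun i => (phi (x.1 i) (x.2 i) : ℤ) - phi (y.1 i) (y.2 i) with he
  have habs : ∑ i, |e i| < d := (sum_abs_phi_sub_phi_le_ALD x y).trans_lt hlt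
  have hsum : ∑ i, e i = 0 := by
    refine Int.eq_zero_of_abs_lt_dvd ?_ ((abs_sum_le_sum_abs _ _).trans_lt habs)
    have hmod : ∑ i, phi (y.1 i) (y.2 i) ≡ ∑ i, phi (x.1 i) (x.2 i) [MOD d] := hy1.trans hx1.symm
    simpa only [he, sum_sub_distrib, Nat.cast_sum] using hmod.dvd
  have hpow (k : ℕ) (hk : 0 < k) (hkd : k ≤ d / 2) :
      ∑ i, (e i : F) * (α ^ ((i : ℕ) + 1)) ^ k = 0 := by
    obtain ⟨k, rfl⟩ := Nat.exists_eq_add_one_of_ne_zero hk.ne'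
    have := congr($(hx2 ⟨k, by omega⟩) - $(hy2 ⟨k, by omega⟩))
    simpa only [he, ← pow_mul, sub_self, ← sum_sub_distrib, ← sub_mul, Int.cast_sub,
      Int.cast_natCast] using this
  have he0 : e = 0 := eq_zero_of_sum_mul_pow_eq_zero (pow_succ_injective (by omega))
    (by omega : d / 2 < q) hsum (by omega) hpow
  exact hxy (eq_of_phi_eq fun i => by simpa [he, sub_eq_zero] using congrFun he0 i)

theorem bch_like_code_ald_ge_d (q l d : ℕ) (hq : q.Prime) (hqodd : Odd q)
    (hqd : d + 1 ≤ q) (hdodd : Odd d) (hl : 0 < l)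
    (n : ℕ) (hn : n = q ^ l - 1)
    (F : Type) [Field F] [Fintype F] (hF : Fintype.card F = q ^ l)
    (α : F) (hα : orderOf α = q ^ l - 1)
    (u : ℕ) (hu : u < d) (z : Fin (d / 2) → F)
    (x y : (Fin n → Bool) × (Fin n → Bool))
    (hx1 : (∑ i, phi (x.1 i) (x.2 i)) % d = u)
    (hx2 : ∀ k : Fin (d / 2),
      ∑ i : Fin n, (phi (x.1 i) (x.2 i) : F) * α ^ (((i : ℕ) + 1) * ((k : ℕ) + 1)) = z k)
    (hy1 : (∑ i, phi (y.1 i) (y.2 i)) % d = u)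
    (hy2 : ∀ k : Fin (d / 2),
      ∑ i : Fin n, (phi (y.1 i) (y.2 i) : F) * α ^ (((i : ℕ) + 1) * ((k : ℕ) + 1)) = z k)
    (hxy : x ≠ y) :
    (d : ℤ) ≤ ALD 1 n x y :=
  bch_like_code_ald_ge_d_general q l d hq hqd n hn F hF α hα u z x y hx1 hx2 hy1 hy2 hxy
end

section
/- Let C_M be a ternary-valued code of length n over {0,1,2} with minimum Manhattan (ℓ_1) distance at least ⌈d/(1+λ)⌉, and for each m let C_H(m) be a binary code of length m with minimum Hamming distance at least ⌈d/λ⌉. Define C_λ(n,d) = {(a;b) ∈ {0,1}^n × {0,1}^n : (a_1+b_1,...,a_n+b_n) ∈ C_M (integer addition) and S(a;b) ∈ C_H(w(a;b))}, where S(a;b) is the subsequence of a restricted to the coordinates where a and b differ. Then any two distinct elements of C_λ(n,d) are at asymmetric Lee distance at least d. -/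
open Finset

def supp {n : ℕ} (a b : Fin n → Bool) : Finset (Fin n) :=
  Finset.univ.filter fun i => a i ≠ b i

def subseq {n : ℕ} (a b : Fin n → Bool) : Fin (wt a b) → Bool :=
  fun k => a ((supp a b).orderIsoOfFin rfl k)

/-!
If the sum vectors `a + b` and `c + d` differ, each coordinate costs at least `1 + λ` times
`|(aᵢ + bᵢ) - (cᵢ + dᵢ)|`, so the Manhattan distance `⌈d/(1+λ)⌉` of `C_M` suffices. If they agree,
the supports agree, every differing coordinate is a swap `(1;0) ↔ (0;1)` of cost `λ`, and these
are exactly the positions where `S(a;b)` and `S(c;d)` differ; the Hamming distance `⌈d/λ⌉` of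
`C_H` finishes.
-/

def bitSum (a b : Bool) : ℕ := (if a then 1 else 0) + (if b then 1 else 0)

lemma mul_natAbs_bitSum_sub_le_aldSym (lam : ℕ) (a b c d : Bool) :
    (1 + lam : ℤ) * ((bitSum a b : ℤ) - bitSum c d).natAbs ≤ aldSym lam a b c d := by
  cases a <;> cases b <;> cases c <;> cases d <;> simp [bitSum, aldSym, ind] <;> linarith

lemma aldSym_of_bitSum_eq (lam : ℕ) {a b c d : Bool} (h : bitSum a b = bitSum c d) :
    aldSym lam a b c d = if (a, b) = (c, d) then 0 else (lam : ℤ) := by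
  cases a <;> cases b <;> cases c <;> cases d <;> simp_all [bitSum, aldSym, ind] <;> ring

lemma ne_iff_ne_of_bitSum_eq {a b c d : Bool} (h : bitSum a b = bitSum c d) :
    a ≠ b ↔ c ≠ d := by
  cases a <;> cases b <;> cases c <;> cases d <;> simp_all [bitSum]

lemma ne_and_ne_iff_of_bitSum_eq {a b c d : Bool} (h : bitSum a b = bitSum c d) :
    a ≠ b ∧ a ≠ c ↔ (a, b) ≠ (c, d) := by
  cases a <;> cases b <;> cases c <;> cases d <;> simp_all [bitSum]

def finRestrict {α β : Type*} [LinearOrder α] (s : Finset α) (f : α → β) : Fin s.card → β :=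
  fun k => f (s.orderEmbOfFin rfl k)

lemma hammingDist_finRestrict {α β : Type*} [LinearOrder α] [DecidableEq β] (s : Finset α)
    (f g : α → β) : hammingDist (finRestrict s f) (finRestrict s g) = #{i ∈ s | f i ≠ g i} := by
  conv_rhs => rw [← s.map_orderEmbOfFin_univ rfl, filter_map, card_map]
  rfl

section

variable {n : ℕ} (x y : (Fin n → Bool) × (Fin n → Bool))

def sumVector : Fin n → ℕ := fun i => bitSum (x.1 i) (x.2 i)

def bitPairs : Fin n → Bool × Bool := fun i => (x.1 i, x.2 i)

lemma bitPairs_injective : Function.Injective (bitPairs (n := n)) := by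
  intro x y h
  exact Prod.ext (funext fun i => congrArg Prod.fst (congrFun h i))
    (funext fun i => congrArg Prod.snd (congrFun h i))

variable {x y}

lemma mul_manhattan_le_ALD (lam : ℕ) :
    (1 + lam : ℤ) * ∑ i, ((sumVector x i : ℤ) - sumVector y i).natAbs
      ≤ ALD lam n x y := by
  rw [Nat.cast_sum, mul_sum]
  exact sum_le_sum fun i _ => mul_natAbs_bitSum_sub_le_aldSym lam _ _ _ _

variable (h : sumVector x = sumVector y)
include h

lemma ALD_eq_mul_hammingDist_of_sumVector_eq (lam : ℕ) :
    ALD lam n x y = lam * hammingDist (bitPairs x) (bitPairs y) := by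
  rw [ALD, hammingDist, card_filter, Nat.cast_sum, mul_sum]
  refine sum_congr rfl fun i _ => ?_
  rw [aldSym_of_bitSum_eq lam (congrFun h i)]
  split_ifs <;> simp_all [bitPairs]

lemma supp_eq_of_sumVector_eq : supp x.1 x.2 = supp y.1 y.2 := by
  ext i
  simp only [supp, mem_filter, mem_univ, true_and]
  exact ne_iff_ne_of_bitSum_eq (congrFun h i)

lemma hammingDist_finRestrict_supp_of_sumVector_eq :
    hammingDist (finRestrict (supp x.1 x.2) x.1) (finRestrict (supp x.1 x.2) y.1)
      = hammingDist (bitPairs x) (bitPairs y) := by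
  rw [hammingDist_finRestrict, hammingDist, supp, filter_filter]
  congr 1
  ext i
  simpa [bitPairs] using ne_and_ne_iff_of_bitSum_eq (congrFun h i)

lemma le_ALD_of_sumVector_eq {lam d : ℕ} (hlam : 0 < lam) {CH : (m : ℕ) → Set (Fin m → Bool)}
    (hCH : ∀ m : ℕ, ∀ p ∈ CH m, ∀ q ∈ CH m, p ≠ q → (d + lam - 1) / lam ≤ hammingDist p q)
    (hx : subseq x.1 x.2 ∈ CH (wt x.1 x.2)) (hy : subseq y.1 y.2 ∈ CH (wt y.1 y.2))
    (hxy : x ≠ y) : (d : ℤ) ≤ ALD lam n x y := by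
  have hdist := hammingDist_finRestrict_supp_of_sumVector_eq h
  have hpos : 0 < hammingDist (bitPairs x) (bitPairs y) :=
    hammingDist_pos.2 (bitPairs_injective.ne hxy)
  change finRestrict (supp x.1 x.2) x.1 ∈ CH (supp x.1 x.2).card at hx
  change finRestrict (supp y.1 y.2) y.1 ∈ CH (supp y.1 y.2).card at hy
  rw [← supp_eq_of_sumVector_eq h] at hy
  have hH := hCH _ _ hx _ hy fun heq => by rw [heq, hammingDist_self] at hdist; omega
  rw [ALD_eq_mul_hammingDist_of_sumVector_eq h]
  exact_mod_cast (ceilDiv_le_iff_le_mul hlam).1 (hdist ▸ hH)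

omit h in
lemma le_ALD_of_sumVector_ne {lam d : ℕ} {CM : Set (Fin n → ℕ)}
    (hCM : ∀ f ∈ CM, ∀ g ∈ CM, f ≠ g →
      (d + lam) / (1 + lam) ≤ ∑ i, ((f i : ℤ) - (g i : ℤ)).natAbs)
    (hx : sumVector x ∈ CM) (hy : sumVector y ∈ CM) (hne : sumVector x ≠ sumVector y) :
    (d : ℤ) ≤ ALD lam n x y := by
  have hM := hCM _ hx _ hy hne
  rw [show d + lam = d + (1 + lam) - 1 by omega, ← Nat.ceilDiv_eq_add_pred_div,
    ceilDiv_le_iff_le_mul (by omega)] at hM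
  calc (d : ℤ) ≤ (1 + lam : ℤ) * ∑ i, ((sumVector x i : ℤ) - sumVector y i).natAbs := by
        exact_mod_cast hM
    _ ≤ ALD lam n x y := mul_manhattan_le_ALD lam

end

theorem composite_code_ald_ge_d_general (lam n d : ℕ) (hlam : 0 < lam)
    (CM : Set (Fin n → ℕ))
    (hCM : ∀ f ∈ CM, ∀ g ∈ CM, f ≠ g →
      ((d + lam) / (1 + lam) : ℕ) ≤ ∑ i, ((f i : ℤ) - (g i : ℤ)).natAbs)
    (CH : (m : ℕ) → Set (Fin m → Bool))
    (hCH : ∀ m : ℕ, ∀ p ∈ CH m, ∀ q ∈ CH m, p ≠ q →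
      ((d + lam - 1) / lam : ℕ) ≤ hammingDist p q)
    (x y : (Fin n → Bool) × (Fin n → Bool))
    (hx1 : (fun i => (if x.1 i then 1 else 0) + (if x.2 i then 1 else 0) : Fin n → ℕ) ∈ CM)
    (hx2 : subseq x.1 x.2 ∈ CH (wt x.1 x.2))
    (hy1 : (fun i => (if y.1 i then 1 else 0) + (if y.2 i then 1 else 0) : Fin n → ℕ) ∈ CM)
    (hy2 : subseq y.1 y.2 ∈ CH (wt y.1 y.2))
    (hxy : x ≠ y) :
    (d : ℤ) ≤ ALD lam n x y := by
  by_cases hs : sumVector x = sumVector y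
  · exact le_ALD_of_sumVector_eq hs hlam hCH hx2 hy2 hxy
  · exact le_ALD_of_sumVector_ne hCM hx1 hy1 hs

theorem composite_code_ald_ge_d (lam n d : ℕ) (hlam : 0 < lam) (hd : 0 < d)
    (CM : Set (Fin n → ℕ)) (hCMval : ∀ f ∈ CM, ∀ i, f i ≤ 2)
    (hCM : ∀ f ∈ CM, ∀ g ∈ CM, f ≠ g →
      ((d + lam) / (1 + lam) : ℕ) ≤ ∑ i, ((f i : ℤ) - (g i : ℤ)).natAbs)
    (CH : (m : ℕ) → Set (Fin m → Bool))
    (hCH : ∀ m : ℕ, ∀ p ∈ CH m, ∀ q ∈ CH m, p ≠ q →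
      ((d + lam - 1) / lam : ℕ) ≤ hammingDist p q)
    (x y : (Fin n → Bool) × (Fin n → Bool))
    (hx1 : (fun i => (if x.1 i then 1 else 0) + (if x.2 i then 1 else 0) : Fin n → ℕ) ∈ CM)
    (hx2 : subseq x.1 x.2 ∈ CH (wt x.1 x.2))
    (hy1 : (fun i => (if y.1 i then 1 else 0) + (if y.2 i then 1 else 0) : Fin n → ℕ) ∈ CM)
    (hy2 : subseq y.1 y.2 ∈ CH (wt y.1 y.2))
    (hxy : x ≠ y) :
    (d : ℤ) ≤ ALD lam n x y :=
  composite_code_ald_ge_d_general lam n d hlam CM hCM CH hCH x y hx1 hx2 hy1 hy2 hxy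
end
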